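/- arXiv:1610.08700 — 2 statements merged into one kernel-verified Lean document; each statement's English description precedes it below -/
import Mathlib

section
/- Let P be a positive logic and L := Int + P. A finite set Γ of positive formulas is unifiable in P (there is a positive substitution σ⁺ such that σ⁺(A) ∈ P for all A ∈ Γ) if and only if Γ is unifiable in L (there is a substitution σ, possibly involving ⊥, such that σ(A) ∈ L for all A ∈ Γ). -/
/-- Propositional formulas over ∧, ∨, →, ⊥ and variables. -/
inductive Fml : Type
  | var : ℕ → Fml
  | bot : Fml
  | and : Fml → Fml → Fml
  | or  : Fml → Fml → Fml
  | imp : Fml → Fml → Fml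

namespace Fml

/-- A formula is positive if it contains no ⊥. -/
def Positive : Fml → Prop
  | var _ => True
  | bot => False
  | and A B => A.Positive ∧ B.Positive
  | or A B => A.Positive ∧ B.Positive
  | imp A B => A.Positive ∧ B.Positive

/-- Evaluation in a Brouwerian (generalized Heyting) algebra, with a designated
value `z` interpreting ⊥. -/
def evalB {α : Type} [GeneralizedHeytingAlgebra α] (z : α) (ν : ℕ → α) : Fml → α
  | var n => ν n
  | bot => z
  | and A B => A.evalB z ν ⊓ B.evalB z ν
  | or A B => A.evalB z ν ⊔ B.evalB z ν
  | imp A B => A.evalB z ν ⇨ B.evalB z ν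

/-- Evaluation in a Heyting algebra (⊥ interpreted as the least element). -/
def eval {α : Type} [HeytingAlgebra α] (ν : ℕ → α) (A : Fml) : α := A.evalB ⊥ ν

/-- Evaluation of (positive) formulas in a Brouwerian algebra
(⊥ gets the junk value ⊤; it is irrelevant for positive formulas). -/
def pEval {α : Type} [GeneralizedHeytingAlgebra α] (ν : ℕ → α) (A : Fml) : α := A.evalB ⊤ ν

/-- Substitution. -/
def subst (σ : ℕ → Fml) : Fml → Fml
  | var n => σ n
  | bot => bot
  | and A B => and (A.subst σ) (B.subst σ)
  | or A B => or (A.subst σ) (B.subst σ)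
  | imp A B => imp (A.subst σ) (B.subst σ)

/-- Replacing every occurrence of ⊥ by the formula `C`. -/
def substBot : Fml → Fml → Fml
  | var n, _ => var n
  | bot, C => C
  | and A B, C => and (A.substBot C) (B.substBot C)
  | or A B, C => or (A.substBot C) (B.substBot C)
  | imp A B, C => imp (A.substBot C) (B.substBot C)

/-- The set of variables occurring in a formula. -/
def vars : Fml → Finset ℕ
  | var n => {n}
  | bot => ∅
  | and A B => A.vars ∪ B.vars
  | or A B => A.vars ∪ B.vars
  | imp A B => A.vars ∪ B.vars

end Fml

/-- The set of positive formulas. -/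
def PosFml : Set Fml := {A | A.Positive}

/-- A substitution is positive if all its values are positive formulas. -/
def PosSubst (σ : ℕ → Fml) : Prop := ∀ n, (σ n).Positive

/-- Validity of a formula in a Heyting algebra. -/
def ValidH (α : Type) [HeytingAlgebra α] (A : Fml) : Prop := ∀ ν : ℕ → α, A.eval ν = ⊤

/-- Intuitionistic propositional logic (via algebraic semantics). -/
def IntL : Set Fml := {A | ∀ (α : Type) [HeytingAlgebra α], ValidH α A}

/-- Superintuitionistic logics. -/
structure IsSILogic (L : Set Fml) : Prop where
  int_sub : IntL ⊆ L
  mp : ∀ A B : Fml, Fml.imp A B ∈ L → A ∈ L → B ∈ L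
  subst_closed : ∀ A ∈ L, ∀ σ : ℕ → Fml, A.subst σ ∈ L

/-- The least superintuitionistic logic containing `Γ`. -/
def IntPlus (Γ : Set Fml) : Set Fml := ⋂₀ {L | IsSILogic L ∧ Γ ⊆ L}

/-- The positive fragment of intuitionistic logic. -/
def IntLPos : Set Fml := IntL ∩ PosFml

/-- Positive logics. -/
structure IsPosLogic (P : Set Fml) : Prop where
  pos : P ⊆ PosFml
  int_sub : IntLPos ⊆ P
  mp : ∀ A B : Fml, Fml.imp A B ∈ P → A ∈ P → B ∈ P
  subst_closed : ∀ A ∈ P, ∀ σ : ℕ → Fml, PosSubst σ → A.subst σ ∈ P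

/-- The least positive logic containing `Γ`. -/
def IntPosPlus (Γ : Set Fml) : Set Fml := ⋂₀ {P | IsPosLogic P ∧ Γ ⊆ P}

/-- Homomorphism of Brouwerian algebras (preserves ⊓, ⊔, ⇨, ⊤). -/
def IsBrHom {α β : Type} [GeneralizedHeytingAlgebra α] [GeneralizedHeytingAlgebra β]
    (f : α → β) : Prop :=
  (∀ a b : α, f (a ⊓ b) = f a ⊓ f b) ∧ (∀ a b : α, f (a ⊔ b) = f a ⊔ f b) ∧
  (∀ a b : α, f (a ⇨ b) = f a ⇨ f b) ∧ f ⊤ = ⊤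

/-- A Heyting algebra is a model of a set of formulas `T`. -/
def Models (α : Type) [HeytingAlgebra α] (T : Set Fml) : Prop := ∀ A ∈ T, ValidH α A

/-- The variety (of Heyting algebras) axiomatized by `T` is B-saturated: any Heyting
algebra whose Brouwerian reduct embeds into the reduct of a model of `T` is itself
a model of `T`. -/
def BSaturated (T : Set Fml) : Prop :=
  ∀ (α : Type) (iα : HeytingAlgebra α),
    (∃ (β : Type) (iβ : HeytingAlgebra β), @Models β iβ T ∧
      ∃ f : α → β, Function.Injective f ∧
        @IsBrHom α β iα.toGeneralizedHeytingAlgebra iβ.toGeneralizedHeytingAlgebra f) →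
    @Models α iα T

/-- A subset of a Brouwerian algebra closed under the Brouwerian operations. -/
def BrClosed {α : Type} [GeneralizedHeytingAlgebra α] (S : Set α) : Prop :=
  ⊤ ∈ S ∧ ∀ a ∈ S, ∀ b ∈ S, a ⊓ b ∈ S ∧ a ⊔ b ∈ S ∧ (a ⇨ b) ∈ S

/-- The Brouwerian subalgebra generated by a set. -/
def genBr {α : Type} [GeneralizedHeytingAlgebra α] (s : Set α) : Set α :=
  ⋂₀ {S | BrClosed S ∧ s ⊆ S}

/-- Conjunction of a list of variables (nonempty case is the intended one). -/
def conjList : List ℕ → Fml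
  | [] => Fml.imp (Fml.var 0) (Fml.var 0)
  | [n] => Fml.var n
  | n :: l => Fml.and (Fml.var n) (conjList l)

/-- The conjunction π^∧ of all variables in a finite set π. -/
def conjOf (π : Finset ℕ) : Fml := conjList (π.sort (· ≤ ·))

/-- Multiple-conclusion rules. -/
def MRule : Type := Finset Fml × Finset Fml

/-- A rule is positive if all its premises and conclusions are positive. -/
def PosRule (r : MRule) : Prop := (∀ A ∈ r.1, A.Positive) ∧ (∀ B ∈ r.2, B.Positive)

/-- Validity of a (positive) m-rule in a Brouwerian algebra. -/
def RuleValid (α : Type) [GeneralizedHeytingAlgebra α] (r : MRule) : Prop :=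
  ∀ ν : ℕ → α, (∀ A ∈ r.1, A.pEval ν = ⊤) → ∃ B ∈ r.2, B.pEval ν = ⊤

/-- A Brouwerian algebra is a model of a set of positive formulas. -/
def ModelsP (β : Type) [GeneralizedHeytingAlgebra β] (P : Set Fml) : Prop :=
  ∀ A ∈ P, ∀ ν : ℕ → β, A.pEval ν = ⊤

/-- Filter of a Brouwerian (or Heyting) algebra. -/
def IsFilter' {α : Type} [GeneralizedHeytingAlgebra α] (F : Set α) : Prop :=
  ⊤ ∈ F ∧ ∀ a b : α, a ∈ F → (a ⇨ b) ∈ F → b ∈ F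

namespace Stmt12Aux

open Fml

/-! ### Basic syntactic lemmas -/

theorem pos_var (n : ℕ) : (Fml.var n).Positive := trivial

theorem posSubstBot {C : Fml} (hC : C.Positive) : ∀ A : Fml, (A.substBot C).Positive
  | .var _ => trivial
  | .bot => hC
  | .and A B => ⟨posSubstBot hC A, posSubstBot hC B⟩
  | .or A B => ⟨posSubstBot hC A, posSubstBot hC B⟩
  | .imp A B => ⟨posSubstBot hC A, posSubstBot hC B⟩

theorem posSubst {σ : ℕ → Fml} (hσ : PosSubst σ) :
    ∀ {A : Fml}, A.Positive → (A.subst σ).Positive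
  | .var n, _ => hσ n
  | .bot, h => h.elim
  | .and A B, h => ⟨posSubst hσ h.1, posSubst hσ h.2⟩
  | .or A B, h => ⟨posSubst hσ h.1, posSubst hσ h.2⟩
  | .imp A B, h => ⟨posSubst hσ h.1, posSubst hσ h.2⟩

theorem evalB_indep {α : Type} [GeneralizedHeytingAlgebra α] (z z' : α) (ν : ℕ → α) :
    ∀ {A : Fml}, A.Positive → A.evalB z ν = A.evalB z' ν
  | .var n, _ => rfl
  | .bot, h => h.elim
  | .and A B, h => by
      simp only [Fml.evalB, evalB_indep z z' ν h.1, evalB_indep z z' ν h.2]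
  | .or A B, h => by
      simp only [Fml.evalB, evalB_indep z z' ν h.1, evalB_indep z z' ν h.2]
  | .imp A B, h => by
      simp only [Fml.evalB, evalB_indep z z' ν h.1, evalB_indep z z' ν h.2]

theorem subst_substBot (C : Fml) (σ : ℕ → Fml) :
    ∀ {A : Fml}, A.Positive →
      (A.subst σ).substBot C = A.subst (fun n => (σ n).substBot C)
  | .var n, _ => rfl
  | .bot, h => h.elim
  | .and A B, h => by
      simp only [Fml.subst, Fml.substBot, subst_substBot C σ h.1, subst_substBot C σ h.2]
  | .or A B, h => by
      simp only [Fml.subst, Fml.substBot, subst_substBot C σ h.1, subst_substBot C σ h.2]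
  | .imp A B, h => by
      simp only [Fml.subst, Fml.substBot, subst_substBot C σ h.1, subst_substBot C σ h.2]

theorem evalB_subst {α : Type} [GeneralizedHeytingAlgebra α] (z : α) (ν : ℕ → α)
    (σ : ℕ → Fml) : ∀ A : Fml, (A.subst σ).evalB z ν = A.evalB z (fun n => (σ n).evalB z ν)
  | .var n => rfl
  | .bot => rfl
  | .and A B => by
      simp only [Fml.subst, Fml.evalB, evalB_subst z ν σ A, evalB_subst z ν σ B]
  | .or A B => by
      simp only [Fml.subst, Fml.evalB, evalB_subst z ν σ A, evalB_subst z ν σ B]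
  | .imp A B => by
      simp only [Fml.subst, Fml.evalB, evalB_subst z ν σ A, evalB_subst z ν σ B]

theorem le_evalB {α : Type} [GeneralizedHeytingAlgebra α] {z : α} {ν : ℕ → α}
    (h : ∀ n, z ≤ ν n) : ∀ A : Fml, z ≤ A.evalB z ν
  | .var n => h n
  | .bot => le_rfl
  | .and A B => le_inf (le_evalB h A) (le_evalB h B)
  | .or A B => (le_evalB h A).trans le_sup_left
  | .imp A B => le_himp_iff.2 (inf_le_left.trans (le_evalB h B))

theorem conjList_pos : ∀ l : List ℕ, (conjList l).Positive
  | [] => ⟨trivial, trivial⟩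
  | [_] => trivial
  | _ :: m :: l => ⟨trivial, conjList_pos (m :: l)⟩

theorem conjList_evalB_le {α : Type} [GeneralizedHeytingAlgebra α] (z : α) (ν : ℕ → α) :
    ∀ (l : List ℕ), ∀ n ∈ l, (conjList l).evalB z ν ≤ ν n
  | [] => by intro n hn; simp at hn
  | [m] => by
      intro n hn
      simp only [List.mem_singleton] at hn
      subst hn
      simp [conjList, Fml.evalB]
  | m :: k :: l => by
      intro n hn
      have hre : conjList (m :: k :: l) = Fml.and (Fml.var m) (conjList (k :: l)) := rfl
      rcases List.mem_cons.1 hn with h | h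
      · subst h
        rw [hre]
        simp only [Fml.evalB]
        exact inf_le_left
      · rw [hre]
        simp only [Fml.evalB]
        exact inf_le_right.trans (conjList_evalB_le z ν (k :: l) n h)

/-! ### Membership in a positive logic via validity -/

theorem memP {P : Set Fml} (hP : IsPosLogic P) {A : Fml} (h1 : A.Positive)
    (h2 : ∀ (α : Type) [HeytingAlgebra α] (ν : ℕ → α), A.eval ν = ⊤) : A ∈ P :=
  hP.int_sub ⟨fun α _ ν => h2 α ν, h1⟩

theorem impP {P : Set Fml} (hP : IsPosLogic P) {A B : Fml} (hA : A.Positive)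
    (hB : B.Positive)
    (h : ∀ (α : Type) [HeytingAlgebra α] (ν : ℕ → α), A.eval ν ≤ B.eval ν) :
    Fml.imp A B ∈ P :=
  memP hP ⟨hA, hB⟩ (fun α _ ν => by
    show A.eval ν ⇨ B.eval ν = ⊤
    exact himp_eq_top_iff.2 (h α ν))

theorem mp2 {P : Set Fml} (hP : IsPosLogic P) {X Y Z : Fml}
    (h : Fml.imp X (Fml.imp Y Z) ∈ P) (hx : X ∈ P) (hy : Y ∈ P) : Z ∈ P :=
  hP.mp Y Z (hP.mp X (Fml.imp Y Z) h hx) hy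

theorem pimp_refl {P : Set Fml} (hP : IsPosLogic P) {A : Fml} (hA : A.Positive) :
    Fml.imp A A ∈ P :=
  impP hP hA hA (fun _ _ _ => le_rfl)

theorem pimp_trans {P : Set Fml} (hP : IsPosLogic P) {A B C : Fml}
    (hA : A.Positive) (hB : B.Positive) (hC : C.Positive)
    (h1 : Fml.imp A B ∈ P) (h2 : Fml.imp B C ∈ P) : Fml.imp A C ∈ P := by
  have T : Fml.imp (Fml.imp A B) (Fml.imp (Fml.imp B C) (Fml.imp A C)) ∈ P := by
    refine impP hP ⟨hA, hB⟩ ⟨⟨hB, hC⟩, hA, hC⟩ ?_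
    intro α _ ν
    show A.eval ν ⇨ B.eval ν ≤ (B.eval ν ⇨ C.eval ν) ⇨ (A.eval ν ⇨ C.eval ν)
    set a := A.eval ν; set b := B.eval ν; set c := C.eval ν
    simp only [le_himp_iff]
    calc (a ⇨ b) ⊓ (b ⇨ c) ⊓ a = (b ⇨ c) ⊓ ((a ⇨ b) ⊓ a) := by ac_rfl
    _ ≤ (b ⇨ c) ⊓ b := inf_le_inf_left _ himp_inf_le
    _ ≤ c := himp_inf_le
  exact mp2 hP T h1 h2

theorem pandElimL {P : Set Fml} (hP : IsPosLogic P) {A B : Fml}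
    (hA : A.Positive) (hB : B.Positive) : Fml.imp (Fml.and A B) A ∈ P :=
  impP hP ⟨hA, hB⟩ hA (fun α _ ν => by
    show A.eval ν ⊓ B.eval ν ≤ A.eval ν; exact inf_le_left)

theorem pandElimR {P : Set Fml} (hP : IsPosLogic P) {A B : Fml}
    (hA : A.Positive) (hB : B.Positive) : Fml.imp (Fml.and A B) B ∈ P :=
  impP hP ⟨hA, hB⟩ hB (fun α _ ν => by
    show A.eval ν ⊓ B.eval ν ≤ B.eval ν; exact inf_le_right)

theorem pandIntro {P : Set Fml} (hP : IsPosLogic P) {A B C : Fml}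
    (hA : A.Positive) (hB : B.Positive) (hC : C.Positive)
    (h1 : Fml.imp C A ∈ P) (h2 : Fml.imp C B ∈ P) : Fml.imp C (Fml.and A B) ∈ P := by
  have T : Fml.imp (Fml.imp C A) (Fml.imp (Fml.imp C B) (Fml.imp C (Fml.and A B))) ∈ P := by
    refine impP hP ⟨hC, hA⟩ ⟨⟨hC, hB⟩, hC, hA, hB⟩ ?_
    intro α _ ν
    show C.eval ν ⇨ A.eval ν ≤ (C.eval ν ⇨ B.eval ν) ⇨ (C.eval ν ⇨ A.eval ν ⊓ B.eval ν)
    rw [le_himp_iff, himp_inf_distrib]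
  exact mp2 hP T h1 h2

theorem porIntroL {P : Set Fml} (hP : IsPosLogic P) {A B : Fml}
    (hA : A.Positive) (hB : B.Positive) : Fml.imp A (Fml.or A B) ∈ P :=
  impP hP hA ⟨hA, hB⟩ (fun α _ ν => by
    show A.eval ν ≤ A.eval ν ⊔ B.eval ν; exact le_sup_left)

theorem porIntroR {P : Set Fml} (hP : IsPosLogic P) {A B : Fml}
    (hA : A.Positive) (hB : B.Positive) : Fml.imp B (Fml.or A B) ∈ P :=
  impP hP hB ⟨hA, hB⟩ (fun α _ ν => by
    show B.eval ν ≤ A.eval ν ⊔ B.eval ν; exact le_sup_right)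

theorem porElim {P : Set Fml} (hP : IsPosLogic P) {A B C : Fml}
    (hA : A.Positive) (hB : B.Positive) (hC : C.Positive)
    (h1 : Fml.imp A C ∈ P) (h2 : Fml.imp B C ∈ P) :
    Fml.imp (Fml.or A B) C ∈ P := by
  have T : Fml.imp (Fml.imp A C) (Fml.imp (Fml.imp B C) (Fml.imp (Fml.or A B) C)) ∈ P := by
    refine impP hP ⟨hA, hC⟩ ⟨⟨hB, hC⟩, ⟨hA, hB⟩, hC⟩ ?_
    intro α _ ν
    show A.eval ν ⇨ C.eval ν ≤
    (B.eval ν ⇨ C.eval ν) ⇨ (A.eval ν ⊔ B.eval ν ⇨ C.eval ν)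
    simp only [le_himp_iff]
    rw [← sup_himp_distrib]
    exact himp_inf_le
  exact mp2 hP T h1 h2

def TopF : Fml := Fml.imp (Fml.var 0) (Fml.var 0)

theorem posTopF : TopF.Positive := ⟨trivial, trivial⟩

theorem ptop {P : Set Fml} (hP : IsPosLogic P) : TopF ∈ P :=
  memP hP posTopF (fun α _ ν => by
    show (Fml.var 0).eval ν ⇨ (Fml.var 0).eval ν = ⊤; exact himp_self)

theorem pimp_top {P : Set Fml} (hP : IsPosLogic P) {A : Fml} (hA : A.Positive) :
    Fml.imp A TopF ∈ P :=
  impP hP hA posTopF (fun α _ ν => by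
    show A.eval ν ≤ (Fml.var 0).eval ν ⇨ (Fml.var 0).eval ν
    rw [himp_self]; exact le_top)

theorem ptop_imp {P : Set Fml} (hP : IsPosLogic P) {A : Fml} (hA : A.Positive)
    (h : A ∈ P) : Fml.imp TopF A ∈ P := by
  have T : Fml.imp A (Fml.imp TopF A) ∈ P := by
    refine impP hP hA ⟨posTopF, hA⟩ ?_
    intro α _ ν
    show A.eval ν ≤ TopF.eval ν ⇨ A.eval ν
    exact le_himp_iff.2 inf_le_left
  exact hP.mp A (Fml.imp TopF A) T h

theorem pimpAnd {P : Set Fml} (hP : IsPosLogic P) {A A' B B' : Fml}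
    (hA : A.Positive) (hA' : A'.Positive) (hB : B.Positive) (hB' : B'.Positive)
    (h1 : Fml.imp A A' ∈ P) (h2 : Fml.imp B B' ∈ P) :
    Fml.imp (Fml.and A B) (Fml.and A' B') ∈ P := by
  have T : Fml.imp (Fml.imp A A') (Fml.imp (Fml.imp B B')
      (Fml.imp (Fml.and A B) (Fml.and A' B'))) ∈ P := by
    refine impP hP ⟨hA, hA'⟩ ⟨⟨hB, hB'⟩, ⟨hA, hB⟩, hA', hB'⟩ ?_
    intro α _ ν
    set a := A.eval ν; set a' := A'.eval ν; set b := B.eval ν; set b' := B'.eval ν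
    show a ⇨ a' ≤ (b ⇨ b') ⇨ (a ⊓ b ⇨ a' ⊓ b')
    simp only [le_himp_iff]
    refine le_inf ?_ ?_
    · exact (le_inf (inf_le_left.trans inf_le_left) (inf_le_right.trans inf_le_left)).trans
        himp_inf_le
    · exact (le_inf (inf_le_left.trans inf_le_right) (inf_le_right.trans inf_le_right)).trans
        himp_inf_le
  exact mp2 hP T h1 h2

theorem pimpOr {P : Set Fml} (hP : IsPosLogic P) {A A' B B' : Fml}
    (hA : A.Positive) (hA' : A'.Positive) (hB : B.Positive) (hB' : B'.Positive)
    (h1 : Fml.imp A A' ∈ P) (h2 : Fml.imp B B' ∈ P) :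
    Fml.imp (Fml.or A B) (Fml.or A' B') ∈ P := by
  have T : Fml.imp (Fml.imp A A') (Fml.imp (Fml.imp B B')
      (Fml.imp (Fml.or A B) (Fml.or A' B'))) ∈ P := by
    refine impP hP ⟨hA, hA'⟩ ⟨⟨hB, hB'⟩, ⟨hA, hB⟩, hA', hB'⟩ ?_
    intro α _ ν
    set a := A.eval ν; set a' := A'.eval ν; set b := B.eval ν; set b' := B'.eval ν
    show a ⇨ a' ≤ (b ⇨ b') ⇨ (a ⊔ b ⇨ a' ⊔ b')
    simp only [le_himp_iff]
    rw [inf_sup_left]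
    refine sup_le ?_ ?_
    · exact ((le_inf (inf_le_left.trans inf_le_left) inf_le_right).trans himp_inf_le).trans
        le_sup_left
    · exact ((le_inf (inf_le_left.trans inf_le_right) inf_le_right).trans himp_inf_le).trans
        le_sup_right
  exact mp2 hP T h1 h2

theorem pimpImp {P : Set Fml} (hP : IsPosLogic P) {A A' B B' : Fml}
    (hA : A.Positive) (hA' : A'.Positive) (hB : B.Positive) (hB' : B'.Positive)
    (h1 : Fml.imp A' A ∈ P) (h2 : Fml.imp B B' ∈ P) :
    Fml.imp (Fml.imp A B) (Fml.imp A' B') ∈ P := by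
  have T : Fml.imp (Fml.imp A' A) (Fml.imp (Fml.imp B B')
      (Fml.imp (Fml.imp A B) (Fml.imp A' B'))) ∈ P := by
    refine impP hP ⟨hA', hA⟩ ⟨⟨hB, hB'⟩, ⟨hA, hB⟩, hA', hB'⟩ ?_
    intro α _ ν
    set a := A.eval ν; set a' := A'.eval ν; set b := B.eval ν; set b' := B'.eval ν
    show a' ⇨ a ≤ (b ⇨ b') ⇨ ((a ⇨ b) ⇨ (a' ⇨ b'))
    simp only [le_himp_iff]
    have e1 : (a' ⇨ a) ⊓ (b ⇨ b') ⊓ (a ⇨ b) ⊓ a' ≤ a :=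
      (le_inf (inf_le_left.trans (inf_le_left.trans inf_le_left)) inf_le_right).trans
        himp_inf_le
    have e2 : (a' ⇨ a) ⊓ (b ⇨ b') ⊓ (a ⇨ b) ⊓ a' ≤ b :=
      (le_inf (inf_le_left.trans inf_le_right) e1).trans himp_inf_le
    exact (le_inf (inf_le_left.trans (inf_le_left.trans inf_le_right)) e2).trans himp_inf_le
  exact mp2 hP T h1 h2

theorem pcurry {P : Set Fml} (hP : IsPosLogic P) {A B C : Fml}
    (hA : A.Positive) (hB : B.Positive) (hC : C.Positive)
    (h : Fml.imp A (Fml.imp B C) ∈ P) : Fml.imp (Fml.and A B) C ∈ P := by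
  have T : Fml.imp (Fml.imp A (Fml.imp B C)) (Fml.imp (Fml.and A B) C) ∈ P := by
    refine impP hP ⟨hA, hB, hC⟩ ⟨⟨hA, hB⟩, hC⟩ ?_
    intro α _ ν
    show A.eval ν ⇨ (B.eval ν ⇨ C.eval ν) ≤ A.eval ν ⊓ B.eval ν ⇨ C.eval ν
    rw [himp_himp]
  exact hP.mp _ _ T h

theorem puncurry {P : Set Fml} (hP : IsPosLogic P) {A B C : Fml}
    (hA : A.Positive) (hB : B.Positive) (hC : C.Positive)
    (h : Fml.imp (Fml.and A B) C ∈ P) : Fml.imp A (Fml.imp B C) ∈ P := by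
  have T : Fml.imp (Fml.imp (Fml.and A B) C) (Fml.imp A (Fml.imp B C)) ∈ P := by
    refine impP hP ⟨⟨hA, hB⟩, hC⟩ ⟨hA, hB, hC⟩ ?_
    intro α _ ν
    show A.eval ν ⊓ B.eval ν ⇨ C.eval ν ≤ A.eval ν ⇨ (B.eval ν ⇨ C.eval ν)
    rw [himp_himp]
  exact hP.mp _ _ T h

theorem pconjOf_elim {P : Set Fml} (hP : IsPosLogic P) {V : Finset ℕ} {n : ℕ}
    (hn : n ∈ V) : Fml.imp (conjOf V) (Fml.var n) ∈ P := by
  refine impP hP (conjList_pos _) trivial ?_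
  intro α _ ν
  show (conjList (V.sort (· ≤ ·))).eval ν ≤ ν n
  exact conjList_evalB_le ⊥ ν _ n ((Finset.mem_sort _).2 hn)

end Stmt12Aux
namespace Stmt12Aux

open Fml

/-! ### The Lindenbaum–Tarski Brouwerian algebra of a positive logic -/

/-- Positive formulas as a type. -/
def PF : Type := {A : Fml // A.Positive}

/-- Provable equivalence in `P`. -/
def pr (P : Set Fml) (A B : PF) : Prop :=
  Fml.imp A.1 B.1 ∈ P ∧ Fml.imp B.1 A.1 ∈ P

/-- The Lindenbaum–Tarski algebra of `P`. -/
def LA (P : Set Fml) : Type := Quot (pr P)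

def mkp {P : Set Fml} (A : Fml) (h : A.Positive) : LA P := Quot.mk _ ⟨A, h⟩

def laTop (P : Set Fml) : LA P := mkp TopF posTopF

theorem le_congr_r {P : Set Fml} (hP : IsPosLogic P) (A : PF) {B₁ B₂ : PF}
    (h : pr P B₁ B₂) : (Fml.imp A.1 B₁.1 ∈ P) = (Fml.imp A.1 B₂.1 ∈ P) :=
  propext ⟨fun hh => pimp_trans hP A.2 B₁.2 B₂.2 hh h.1,
    fun hh => pimp_trans hP A.2 B₂.2 B₁.2 hh h.2⟩

theorem le_congr_l {P : Set Fml} (hP : IsPosLogic P) {A₁ A₂ : PF} (B : PF)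
    (h : pr P A₁ A₂) : (Fml.imp A₁.1 B.1 ∈ P) = (Fml.imp A₂.1 B.1 ∈ P) :=
  propext ⟨fun hh => pimp_trans hP A₂.2 A₁.2 B.2 h.2 hh,
    fun hh => pimp_trans hP A₁.2 A₂.2 B.2 h.1 hh⟩

def laLattice {P : Set Fml} (hP : IsPosLogic P) : Lattice (LA P) where
  le x y := Quot.liftOn₂ x y (fun A B => Fml.imp A.1 B.1 ∈ P)
    (fun A B₁ B₂ h => le_congr_r hP A h) (fun A₁ A₂ B h => le_congr_l hP B h)
  le_refl x := by
    induction x using Quot.ind with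
    | _ A => exact pimp_refl hP A.2
  le_trans x y z := by
    induction x using Quot.ind with
    | _ A =>
    induction y using Quot.ind with
    | _ B =>
    induction z using Quot.ind with
    | _ C => exact fun h1 h2 => pimp_trans hP A.2 B.2 C.2 h1 h2
  le_antisymm x y := by
    induction x using Quot.ind with
    | _ A =>
    induction y using Quot.ind with
    | _ B => exact fun h1 h2 => Quot.sound ⟨h1, h2⟩
  sup x y := Quot.liftOn₂ x y (fun A B => mkp (Fml.or A.1 B.1) ⟨A.2, B.2⟩)
    (fun A B₁ B₂ h => Quot.sound
      ⟨pimpOr hP A.2 A.2 B₁.2 B₂.2 (pimp_refl hP A.2) h.1,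
       pimpOr hP A.2 A.2 B₂.2 B₁.2 (pimp_refl hP A.2) h.2⟩)
    (fun A₁ A₂ B h => Quot.sound
      ⟨pimpOr hP A₁.2 A₂.2 B.2 B.2 h.1 (pimp_refl hP B.2),
       pimpOr hP A₂.2 A₁.2 B.2 B.2 h.2 (pimp_refl hP B.2)⟩)
  le_sup_left x y := by
    induction x using Quot.ind with
    | _ A =>
    induction y using Quot.ind with
    | _ B => exact porIntroL hP A.2 B.2
  le_sup_right x y := by
    induction x using Quot.ind with
    | _ A =>
    induction y using Quot.ind with
    | _ B => exact porIntroR hP A.2 B.2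
  sup_le x y z := by
    induction x using Quot.ind with
    | _ A =>
    induction y using Quot.ind with
    | _ B =>
    induction z using Quot.ind with
    | _ C => exact fun h1 h2 => porElim hP A.2 B.2 C.2 h1 h2
  inf x y := Quot.liftOn₂ x y (fun A B => mkp (Fml.and A.1 B.1) ⟨A.2, B.2⟩)
    (fun A B₁ B₂ h => Quot.sound
      ⟨pimpAnd hP A.2 A.2 B₁.2 B₂.2 (pimp_refl hP A.2) h.1,
       pimpAnd hP A.2 A.2 B₂.2 B₁.2 (pimp_refl hP A.2) h.2⟩)
    (fun A₁ A₂ B h => Quot.sound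
      ⟨pimpAnd hP A₁.2 A₂.2 B.2 B.2 h.1 (pimp_refl hP B.2),
       pimpAnd hP A₂.2 A₁.2 B.2 B.2 h.2 (pimp_refl hP B.2)⟩)
  inf_le_left x y := by
    induction x using Quot.ind with
    | _ A =>
    induction y using Quot.ind with
    | _ B => exact pandElimL hP A.2 B.2
  inf_le_right x y := by
    induction x using Quot.ind with
    | _ A =>
    induction y using Quot.ind with
    | _ B => exact pandElimR hP A.2 B.2
  le_inf x y z := by
    induction x using Quot.ind with
    | _ A =>
    induction y using Quot.ind with
    | _ B =>
    induction z using Quot.ind with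
    | _ C => exact fun h1 h2 => pandIntro hP B.2 C.2 A.2 h1 h2

def laGHA {P : Set Fml} (hP : IsPosLogic P) : GeneralizedHeytingAlgebra (LA P) :=
  letI : Lattice (LA P) := laLattice hP
  letI : Top (LA P) := ⟨laTop P⟩
  letI : HImp (LA P) :=
    ⟨fun x y => Quot.liftOn₂ x y (fun A B => mkp (Fml.imp A.1 B.1) ⟨A.2, B.2⟩)
      (fun A B₁ B₂ h => Quot.sound
        ⟨pimpImp hP A.2 A.2 B₁.2 B₂.2 (pimp_refl hP A.2) h.1,
         pimpImp hP A.2 A.2 B₂.2 B₁.2 (pimp_refl hP A.2) h.2⟩)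
      (fun A₁ A₂ B h => Quot.sound
        ⟨pimpImp hP A₁.2 A₂.2 B.2 B.2 h.2 (pimp_refl hP B.2),
         pimpImp hP A₂.2 A₁.2 B.2 B.2 h.1 (pimp_refl hP B.2)⟩)⟩
  { le_top := fun x => by
      induction x using Quot.ind with
      | _ A => exact pimp_top hP A.2
    le_himp_iff := fun x y z => by
      induction x using Quot.ind with
      | _ A =>
      induction y using Quot.ind with
      | _ B =>
      induction z using Quot.ind with
      | _ C =>
        exact ⟨fun h => pcurry hP A.2 B.2 C.2 h, fun h => puncurry hP A.2 B.2 C.2 h⟩ }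

theorem eq_top_of_mem {P : Set Fml} (hP : IsPosLogic P) {A : Fml} (hA : A.Positive)
    (h : A ∈ P) : mkp (P := P) A hA = laTop P :=
  Quot.sound ⟨pimp_top hP hA, ptop_imp hP hA h⟩

theorem mem_of_eq_top {P : Set Fml} (hP : IsPosLogic P) {A : Fml} {hA : A.Positive}
    (h : mkp (P := P) A hA = laTop P) : A ∈ P := by
  have hcong : ∀ B₁ B₂ : PF, pr P B₁ B₂ →
      (Fml.imp TopF B₁.1 ∈ P) = (Fml.imp TopF B₂.1 ∈ P) :=
    fun B₁ B₂ hb => le_congr_r hP ⟨TopF, posTopF⟩ hb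
  have h2 := congrArg (Quot.lift (fun B : PF => Fml.imp TopF B.1 ∈ P) hcong) h
  have h3 : Fml.imp TopF A ∈ P := by
    rw [show (Fml.imp TopF A ∈ P) = (Fml.imp TopF TopF ∈ P) from h2]
    exact pimp_refl hP posTopF
  exact hP.mp TopF A h3 (ptop hP)

theorem evalB_mk_pos {P : Set Fml} (hP : IsPosLogic P) (z : LA P) (τ : ℕ → PF) :
    ∀ {A : Fml} (hA : A.Positive),
      @Fml.evalB (LA P) (laGHA hP) z (fun n => Quot.mk _ (τ n)) A =
        mkp (A.subst (fun n => (τ n).1)) (posSubst (fun n => (τ n).2) hA)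
  | .var n, _ => rfl
  | .bot, h => h.elim
  | .and A B, h => by
      simp only [Fml.evalB, evalB_mk_pos hP z τ h.1, evalB_mk_pos hP z τ h.2]
      rfl
  | .or A B, h => by
      simp only [Fml.evalB, evalB_mk_pos hP z τ h.1, evalB_mk_pos hP z τ h.2]
      rfl
  | .imp A B, h => by
      simp only [Fml.evalB, evalB_mk_pos hP z τ h.1, evalB_mk_pos hP z τ h.2]
      rfl

theorem laModels {P : Set Fml} (hP : IsPosLogic P) : @ModelsP (LA P) (laGHA hP) P := by
  intro A hA ν
  have hApos : A.Positive := hP.pos hA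
  let τ : ℕ → PF := fun n => (Quot.exists_rep (ν n)).choose
  have hτ : (fun n => Quot.mk (pr P) (τ n)) = ν :=
    funext fun n => (Quot.exists_rep (ν n)).choose_spec
  letI : GeneralizedHeytingAlgebra (LA P) := laGHA hP
  show Fml.evalB ⊤ ν A = ⊤
  rw [← hτ, evalB_mk_pos hP _ τ hApos]
  exact eq_top_of_mem hP _ (hP.subst_closed A hA _ (fun n => (τ n).2))

theorem evalB_extract {P : Set Fml} (hP : IsPosLogic P) {D : Fml} (hD : D.Positive)
    (ν : ℕ → LA P) :
    ∀ C : Fml, (∀ n ∈ C.vars, ν n = mkp (Fml.var n) trivial) →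
      @Fml.evalB (LA P) (laGHA hP) (mkp D hD) ν C =
        mkp (C.substBot D) (posSubstBot hD C)
  | .var n, h => h n (by simp [Fml.vars])
  | .bot, _ => rfl
  | .and A B, h => by
      have hA := evalB_extract hP hD ν A
        (fun n hn => h n (Finset.mem_union_left _ hn))
      have hB := evalB_extract hP hD ν B
        (fun n hn => h n (Finset.mem_union_right _ hn))
      letI : GeneralizedHeytingAlgebra (LA P) := laGHA hP
      show Fml.evalB (mkp D hD) ν A ⊓ Fml.evalB (mkp D hD) ν B = _
      rw [hA, hB]; rfl
  | .or A B, h => by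
      have hA := evalB_extract hP hD ν A
        (fun n hn => h n (Finset.mem_union_left _ hn))
      have hB := evalB_extract hP hD ν B
        (fun n hn => h n (Finset.mem_union_right _ hn))
      letI : GeneralizedHeytingAlgebra (LA P) := laGHA hP
      show Fml.evalB (mkp D hD) ν A ⊔ Fml.evalB (mkp D hD) ν B = _
      rw [hA, hB]; rfl
  | .imp A B, h => by
      have hA := evalB_extract hP hD ν A
        (fun n hn => h n (Finset.mem_union_left _ hn))
      have hB := evalB_extract hP hD ν B
        (fun n hn => h n (Finset.mem_union_right _ hn))
      letI : GeneralizedHeytingAlgebra (LA P) := laGHA hP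
      show Fml.evalB (mkp D hD) ν A ⇨ Fml.evalB (mkp D hD) ν B = _
      rw [hA, hB]; rfl

end Stmt12Aux
namespace Stmt12Aux

open Fml

/-! ### The Heyting algebra on the principal filter `↑z` of a Brouwerian algebra -/

def upHA {β : Type} [GeneralizedHeytingAlgebra β] (z : β) :
    HeytingAlgebra {a : β // z ≤ a} where
  sup a b := ⟨a.1 ⊔ b.1, a.2.trans le_sup_left⟩
  le_sup_left a b := show a.1 ≤ a.1 ⊔ b.1 from le_sup_left
  le_sup_right a b := show b.1 ≤ a.1 ⊔ b.1 from le_sup_right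
  sup_le a b c h1 h2 := show a.1 ⊔ b.1 ≤ c.1 from sup_le h1 h2
  inf a b := ⟨a.1 ⊓ b.1, le_inf a.2 b.2⟩
  inf_le_left a b := show a.1 ⊓ b.1 ≤ a.1 from inf_le_left
  inf_le_right a b := show a.1 ⊓ b.1 ≤ b.1 from inf_le_right
  le_inf a b c h1 h2 := show a.1 ≤ b.1 ⊓ c.1 from le_inf h1 h2
  top := ⟨⊤, le_top⟩
  le_top a := show a.1 ≤ (⊤ : β) from le_top
  bot := ⟨z, le_refl z⟩
  bot_le a := a.2
  himp a b := ⟨a.1 ⇨ b.1, le_himp_iff.2 (inf_le_left.trans b.2)⟩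
  le_himp_iff a b c :=
    show a.1 ≤ b.1 ⇨ c.1 ↔ a.1 ⊓ b.1 ≤ c.1 from le_himp_iff
  compl a := ⟨a.1 ⇨ z, le_himp_iff.2 (inf_le_left.trans (le_refl z))⟩
  himp_bot a := rfl

theorem evalB_up {β : Type} [GeneralizedHeytingAlgebra β] (z : β)
    (ν' : ℕ → {a : β // z ≤ a}) :
    ∀ C : Fml,
      (@Fml.evalB {a : β // z ≤ a} (upHA z).toGeneralizedHeytingAlgebra
        ⟨z, le_refl z⟩ ν' C).1 = C.evalB z (fun n => (ν' n).1)
  | .var n => rfl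
  | .bot => rfl
  | .and A B => by
      show ((@Fml.evalB _ (upHA z).toGeneralizedHeytingAlgebra ⟨z, le_refl z⟩ ν' A).1 ⊓
        (@Fml.evalB _ (upHA z).toGeneralizedHeytingAlgebra ⟨z, le_refl z⟩ ν' B).1) = _
      rw [evalB_up z ν' A, evalB_up z ν' B]; rfl
  | .or A B => by
      show ((@Fml.evalB _ (upHA z).toGeneralizedHeytingAlgebra ⟨z, le_refl z⟩ ν' A).1 ⊔
        (@Fml.evalB _ (upHA z).toGeneralizedHeytingAlgebra ⟨z, le_refl z⟩ ν' B).1) = _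
      rw [evalB_up z ν' A, evalB_up z ν' B]; rfl
  | .imp A B => by
      show ((@Fml.evalB _ (upHA z).toGeneralizedHeytingAlgebra ⟨z, le_refl z⟩ ν' A).1 ⇨
        (@Fml.evalB _ (upHA z).toGeneralizedHeytingAlgebra ⟨z, le_refl z⟩ ν' B).1) = _
      rw [evalB_up z ν' A, evalB_up z ν' B]; rfl

/-! ### The auxiliary superintuitionistic logic `L0` -/

/-- Formulas valid in every Brouwerian model of `P` for every interpretation of `⊥`
below all values of the variables. -/
def L0 (P : Set Fml) : Set Fml :=
  {C | ∀ (β : Type) (iβ : GeneralizedHeytingAlgebra β), @ModelsP β iβ P →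
    ∀ (z : β) (ν : ℕ → β), (∀ n, z ≤ ν n) → @Fml.evalB β iβ z ν C = ⊤}

theorem L0_SI (P : Set Fml) : IsSILogic (L0 P) where
  int_sub := by
    intro C hC β iβ _ z ν hz
    letI : HeytingAlgebra {a : β // z ≤ a} := upHA z
    have h1 : Fml.eval (fun n => (⟨ν n, hz n⟩ : {a : β // z ≤ a})) C = ⊤ :=
      hC {a : β // z ≤ a} _
    have h2 := congrArg Subtype.val h1
    rw [show Fml.eval (fun n => (⟨ν n, hz n⟩ : {a : β // z ≤ a})) C =
        @Fml.evalB {a : β // z ≤ a} (upHA z).toGeneralizedHeytingAlgebra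
          ⟨z, le_refl z⟩ (fun n => ⟨ν n, hz n⟩) C from rfl,
      evalB_up z _ C] at h2
    exact h2
  mp := by
    intro A B hAB hA β iβ hM z ν hz
    have h1 := hAB β iβ hM z ν hz
    have h2 := hA β iβ hM z ν hz
    have h3 : Fml.evalB z ν A ⇨ Fml.evalB z ν B = ⊤ := h1
    rw [himp_eq_top_iff, h2, top_le_iff] at h3
    exact h3
  subst_closed := by
    intro A hA σ β iβ hM z ν hz
    rw [evalB_subst]
    exact hA β iβ hM z _ (fun n => le_evalB hz (σ n))

theorem P_sub_L0 {P : Set Fml} (hP : IsPosLogic P) : P ⊆ L0 P := by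
  intro A hA β iβ hM z ν hz
  rw [evalB_indep z ⊤ ν (hP.pos hA)]
  exact hM A hA ν

end Stmt12Aux
open Stmt12Aux in
/-- a finite set Γ of positive formulas is unifiable in a positive
logic P iff it is unifiable in L = Int + P. -/
theorem stmt12 (P : Set Fml) (hP : IsPosLogic P) (Γ : Finset Fml)
    (hΓ : ∀ A ∈ Γ, A.Positive) :
    (∃ σ : ℕ → Fml, PosSubst σ ∧ ∀ A ∈ Γ, A.subst σ ∈ P) ↔
    (∃ σ : ℕ → Fml, ∀ A ∈ Γ, A.subst σ ∈ IntPlus P) := by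
  constructor
  · rintro ⟨σ, _, hσ⟩
    exact ⟨σ, fun A hA => Set.mem_sInter.2 (fun L hL => hL.2 (hσ A hA))⟩
  · rintro ⟨σ, hσ⟩
    classical
    set V : Finset ℕ := Γ.sup (fun A => (A.subst σ).vars) with hVdef
    have hD : (conjOf V).Positive := conjList_pos _
    refine ⟨fun n => (σ n).substBot (conjOf V), fun n => posSubstBot hD _, ?_⟩
    intro A hA
    rw [← subst_substBot (conjOf V) σ (hΓ A hA)]
    have hC0 : A.subst σ ∈ L0 P :=
      Set.mem_sInter.1 (hσ A hA) (L0 P) ⟨L0_SI P, P_sub_L0 hP⟩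
    letI : GeneralizedHeytingAlgebra (LA P) := laGHA hP
    set ν : ℕ → LA P := fun n =>
      if n ∈ V then mkp (Fml.var n) trivial else mkp (conjOf V) hD with hνdef
    have hz : ∀ n, (mkp (P := P) (conjOf V) hD) ≤ ν n := by
      intro n
      by_cases h : n ∈ V
      · simp only [hνdef, if_pos h]
        exact pconjOf_elim hP h
      · simp only [hνdef, if_neg h]
        exact le_refl _
    have hval := hC0 (LA P) (laGHA hP) (laModels hP) (mkp (conjOf V) hD) ν hz
    have hsub : (A.subst σ).vars ⊆ V := Finset.le_sup (f := fun A => (A.subst σ).vars) hA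
    rw [evalB_extract hP hD ν (A.subst σ)
      (fun n hn => by simp only [hνdef, if_pos (hsub hn)])] at hval
    exact mem_of_eq_top hP hval
end

section
/- Let P be a positive logic and L := Int + P. A positive multiple-conclusion rule Γ/Δ (with Γ, Δ finite sets of positive formulas) is admissible for P if and only if it is admissible for L. (Admissible for P: every positive substitution unifying all of Γ in P unifies some formula of Δ in P; admissible for L: every substitution unifying all of Γ in L unifies some formula of Δ in L.) -/
/-!
Int + P is conservative over P in a strong form: if E ∈ Int + P, then E[⊥ := c, q := σ q] ∈ P
for all positive c and σ with c ⊢_Int σ q for every variable q. Indeed, the formulas with this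
property form a superintuitionistic logic containing P; intuitionistic theorems have it because
the interval [z, ⊤] of a Heyting algebra is a Heyting algebra with bottom z.

For a positive rule, a unifier σ of Γ in Int + P becomes a positive unifier of Γ in P after
replacing ⊥ by a fresh variable x and each variable q by q ∨ x; the substitution x := ⊥ undoes
this up to intuitionistic equivalence. Conversely, a positive theorem of Int + P is in P: take
for c the conjunction of its variables.
-/

namespace Fml

def substB : Fml → Fml → (ℕ → Fml) → Fml
  | var n, _, σ => σ n
  | bot, c, _ => c
  | and A B, c, σ => and (A.substB c σ) (B.substB c σ)
  | or A B, c, σ => or (A.substB c σ) (B.substB c σ)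
  | imp A B, c, σ => imp (A.substB c σ) (B.substB c σ)

theorem substB_eq_subst_of_positive (c : Fml) (σ : ℕ → Fml) :
    ∀ E : Fml, E.Positive → E.substB c σ = E.subst σ
  | var _, _ => rfl
  | bot, h => h.elim
  | and A B, h | or A B, h | imp A B, h => by
      simp only [substB, subst, substB_eq_subst_of_positive c σ A h.1,
        substB_eq_subst_of_positive c σ B h.2]

theorem positive_substB {c : Fml} (hc : c.Positive) {σ : ℕ → Fml} (hσ : PosSubst σ) :
    ∀ E : Fml, (E.substB c σ).Positive
  | var n => hσ n
  | bot => hc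
  | and A B | or A B | imp A B => ⟨positive_substB hc hσ A, positive_substB hc hσ B⟩

theorem positive_subst {σ : ℕ → Fml} (hσ : PosSubst σ) {E : Fml} (hE : E.Positive) :
    (E.subst σ).Positive :=
  substB_eq_subst_of_positive (var 0) σ E hE ▸ positive_substB (c := var 0) trivial hσ E

theorem substB_subst (σ : ℕ → Fml) (c : Fml) (ρ : ℕ → Fml) : ∀ E : Fml,
    (E.subst σ).substB c ρ = E.substB c (fun n => (σ n).substB c ρ)
  | var _ | bot => rfl
  | and A B | or A B | imp A B => by
      simp only [subst, substB, substB_subst σ c ρ A, substB_subst σ c ρ B]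

section Eval

variable {α : Type} [GeneralizedHeytingAlgebra α]

theorem evalB_substB (z : α) (ν : ℕ → α) (c : Fml) (σ : ℕ → Fml) : ∀ E : Fml,
    (E.substB c σ).evalB z ν = E.evalB (c.evalB z ν) (fun n => (σ n).evalB z ν)
  | var _ | bot => rfl
  | and A B | or A B | imp A B => by
      simp only [substB, evalB, evalB_substB z ν c σ A, evalB_substB z ν c σ B]

theorem evalB_subst (z : α) (ν : ℕ → α) (σ : ℕ → Fml) : ∀ E : Fml,
    (E.subst σ).evalB z ν = E.evalB z (fun n => (σ n).evalB z ν)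
  | var _ | bot => rfl
  | and A B | or A B | imp A B => by
      simp only [subst, evalB, evalB_subst z ν σ A, evalB_subst z ν σ B]

theorem evalB_congr (z : α) {ν ν' : ℕ → α} : ∀ E : Fml,
    (∀ q ∈ E.vars, ν q = ν' q) → E.evalB z ν = E.evalB z ν'
  | var n, h => h n (Finset.mem_singleton_self n)
  | bot, _ => rfl
  | and A B, h | or A B, h | imp A B, h => by
      simp only [evalB, evalB_congr z A (fun q hq => h q (Finset.mem_union_left _ hq)),
        evalB_congr z B (fun q hq => h q (Finset.mem_union_right _ hq))]

end Eval

end Fml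

open Fml

theorem imp_mem_IntL_iff {A B : Fml} :
    imp A B ∈ IntL ↔ ∀ (α : Type) [HeytingAlgebra α] (ν : ℕ → α), A.eval ν ≤ B.eval ν :=
  forall_congr' fun _ => forall_congr' fun _ => forall_congr' fun _ => himp_eq_top_iff

theorem imp_mem_IntL_of_eval_eq {A B : Fml}
    (h : ∀ (α : Type) [HeytingAlgebra α] (ν : ℕ → α), A.eval ν = B.eval ν) : imp A B ∈ IntL :=
  imp_mem_IntL_iff.2 fun α _ ν => (h α ν).le

namespace Set.Ici

variable {α : Type} [GeneralizedHeytingAlgebra α]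

instance heytingAlgebra (z : α) : HeytingAlgebra (Ici z) :=
  { Ici.lattice, Ici.boundedOrder with
    himp := fun a b => ⟨(a : α) ⇨ b, b.2.trans le_himp⟩
    le_himp_iff := fun _ _ _ => le_himp_iff (α := α)
    compl := fun a => ⟨(a : α) ⇨ z, le_himp⟩
    himp_bot := fun _ => rfl }

theorem coe_evalB_bot {z : α} (ν : ℕ → Ici z) : ∀ E : Fml,
    ((E.evalB ⊥ ν : Ici z) : α) = E.evalB z (fun q => ν q)
  | .var _ | .bot => rfl
  | .and A B | .or A B | .imp A B => by
      simp only [evalB, ← coe_evalB_bot ν A, ← coe_evalB_bot ν B]; rfl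

end Set.Ici

theorem evalB_eq_top_of_mem_IntL {α : Type} [GeneralizedHeytingAlgebra α] {E : Fml}
    (hE : E ∈ IntL) {z : α} {ν : ℕ → α} (hz : ∀ q, z ≤ ν q) : E.evalB z ν = ⊤ := by
  have h := congrArg Subtype.val (hE (Set.Ici z) fun q => ⟨ν q, hz q⟩)
  rwa [eval, Set.Ici.coe_evalB_bot] at h

theorem le_evalB {α : Type} [GeneralizedHeytingAlgebra α] {z : α} {ν : ℕ → α}
    (hz : ∀ q, z ≤ ν q) : ∀ E : Fml, z ≤ E.evalB z ν
  | .var n => hz n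
  | .bot => le_rfl
  | .and A B => le_inf (le_evalB hz A) (le_evalB hz B)
  | .or A _ => le_sup_of_le_left (le_evalB hz A)
  | .imp _ B => (le_evalB hz B).trans le_himp

theorem imp_substB_mem_IntL {c : Fml} {σ : ℕ → Fml} (hσ : ∀ q, imp c (σ q) ∈ IntL)
    (E : Fml) : imp c (E.substB c σ) ∈ IntL :=
  imp_mem_IntL_iff.2 fun α _ ν => by
    rw [eval, eval, evalB_substB]
    exact le_evalB (fun q => imp_mem_IntL_iff.1 (hσ q) α ν) E

theorem substB_mem_IntL {E : Fml} (hE : E ∈ IntL) {c : Fml} {σ : ℕ → Fml}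
    (hσ : ∀ q, imp c (σ q) ∈ IntL) : E.substB c σ ∈ IntL := fun α _ ν => by
  rw [eval, evalB_substB]
  exact evalB_eq_top_of_mem_IntL hE fun q => imp_mem_IntL_iff.1 (hσ q) α ν

theorem positive_conjList : ∀ l : List ℕ, (conjList l).Positive
  | [] => ⟨trivial, trivial⟩
  | [_] => trivial
  | _ :: m :: t => ⟨trivial, positive_conjList (m :: t)⟩

theorem evalB_conjList_le {α : Type} [GeneralizedHeytingAlgebra α] (z : α) (ν : ℕ → α) :
    ∀ {l : List ℕ} {q : ℕ}, q ∈ l → (conjList l).evalB z ν ≤ ν q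
  | [_], _, List.Mem.head _ => le_rfl
  | _ :: _ :: _, _, List.Mem.head _ => inf_le_left
  | _ :: m :: t, _, List.Mem.tail _ hq =>
      inf_le_right.trans (evalB_conjList_le z ν (l := m :: t) hq)

theorem positive_conjOf (V : Finset ℕ) : (conjOf V).Positive := positive_conjList _

theorem imp_conjOf_mem_IntL {V : Finset ℕ} {q : ℕ} (hq : q ∈ V) :
    imp (conjOf V) (var q) ∈ IntL :=
  imp_mem_IntL_iff.2 fun _ _ ν => evalB_conjList_le ⊥ ν ((Finset.mem_sort _).2 hq)

theorem IntPlus_subset {Γ L : Set Fml} (hL : IsSILogic L) (hΓ : Γ ⊆ L) : IntPlus Γ ⊆ L :=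
  Set.sInter_subset_of_mem ⟨hL, hΓ⟩

theorem subset_IntPlus (Γ : Set Fml) : Γ ⊆ IntPlus Γ :=
  Set.subset_sInter fun _ hL => hL.2

theorem isSILogic_IntPlus (Γ : Set Fml) : IsSILogic (IntPlus Γ) where
  int_sub _ hA := Set.mem_sInter.2 fun _ hL => hL.1.int_sub hA
  mp A B hAB hA := Set.mem_sInter.2 fun L hL =>
    hL.1.mp A B (Set.mem_sInter.1 hAB L hL) (Set.mem_sInter.1 hA L hL)
  subst_closed A hA σ := Set.mem_sInter.2 fun L hL =>
    hL.1.subst_closed A (Set.mem_sInter.1 hA L hL) σ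

theorem IsSILogic.mem_of_imp_mem_IntL {L : Set Fml} (hL : IsSILogic L) {A B : Fml}
    (hA : A ∈ L) (hAB : imp A B ∈ IntL) : B ∈ L :=
  hL.mp A B (hL.int_sub hAB) hA

theorem IsPosLogic.mem_of_imp_mem_IntL {P : Set Fml} (hP : IsPosLogic P) {A B : Fml}
    (hA : A ∈ P) (hB : B.Positive) (hAB : imp A B ∈ IntL) : B ∈ P :=
  hP.mp A B (hP.int_sub ⟨hAB, hP.pos hA, hB⟩) hA

-- Quantifying over `σ`, and not only over `c`, makes this set closed under substitution.
def PosTranslationsIn (P : Set Fml) : Set Fml :=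
  {E | ∀ (c : Fml) (σ : ℕ → Fml), c.Positive → PosSubst σ → (∀ q, imp c (σ q) ∈ IntL) →
    E.substB c σ ∈ P}

theorem isSILogic_posTranslationsIn {P : Set Fml} (hP : IsPosLogic P) :
    IsSILogic (PosTranslationsIn P) where
  int_sub E hE c σ hc hσ hcσ := hP.int_sub ⟨substB_mem_IntL hE hcσ, positive_substB hc hσ E⟩
  mp A B hAB hA c σ hc hσ hcσ := hP.mp _ _ (hAB c σ hc hσ hcσ) (hA c σ hc hσ hcσ)
  subst_closed E hE τ c σ hc hσ hcσ := by
    rw [substB_subst]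
    exact hE c _ hc (fun n => positive_substB hc hσ (τ n)) fun n => imp_substB_mem_IntL hcσ (τ n)

theorem subset_posTranslationsIn {P : Set Fml} (hP : IsPosLogic P) :
    P ⊆ PosTranslationsIn P := fun E hE c σ _ hσ _ =>
  substB_eq_subst_of_positive c σ E (hP.pos hE) ▸ hP.subst_closed E hE σ hσ

theorem substB_mem_of_mem_IntPlus {P : Set Fml} (hP : IsPosLogic P) {E : Fml}
    (hE : E ∈ IntPlus P) {c : Fml} (hc : c.Positive) {σ : ℕ → Fml} (hσ : PosSubst σ)
    (hcσ : ∀ q, imp c (σ q) ∈ IntL) : E.substB c σ ∈ P :=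
  IntPlus_subset (isSILogic_posTranslationsIn hP) (subset_posTranslationsIn hP) hE c σ hc hσ hcσ

theorem mem_of_mem_IntPlus_of_positive {P : Set Fml} (hP : IsPosLogic P) {E : Fml}
    (hE : E ∈ IntPlus P) (hpos : E.Positive) : E ∈ P := by
  classical
  set c := conjOf E.vars
  set σ : ℕ → Fml := fun q => if q ∈ E.vars then var q else c
  have hσ : ∀ q, (σ q).Positive ∧ imp c (σ q) ∈ IntL := fun q => by
    by_cases hq : q ∈ E.vars
    · simp only [σ, if_pos hq]
      exact ⟨trivial, imp_conjOf_mem_IntL hq⟩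
    · simp only [σ, if_neg hq]
      exact ⟨positive_conjOf _, imp_mem_IntL_of_eval_eq fun _ _ _ => rfl⟩
  have hEσ : E.subst σ ∈ P := substB_eq_subst_of_positive c σ E hpos ▸
    substB_mem_of_mem_IntPlus hP hE (positive_conjOf _) (fun q => (hσ q).1) fun q => (hσ q).2
  refine hP.mem_of_imp_mem_IntL hEσ hpos (imp_mem_IntL_of_eval_eq fun α _ ν => ?_)
  rw [eval, eval, evalB_subst]
  exact evalB_congr _ E fun q hq => by simp only [σ, if_pos hq, evalB]

theorem eval_subst_update_bot_substB_or {α : Type} [HeytingAlgebra α] {E : Fml} {x : ℕ}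
    (hx : x ∉ E.vars) (ν : ℕ → α) :
    ((E.substB (var x) fun q => or (var q) (var x)).subst (Function.update var x bot)).eval ν =
      E.eval ν := by
  have hμ : (fun n => (Function.update var x bot n).evalB ⊥ ν) = Function.update ν x ⊥ := by
    funext n
    exact Function.apply_update (fun _ F => F.evalB ⊥ ν) var x bot n
  rw [eval, eval, evalB_subst, evalB_substB, hμ]
  simp only [evalB, Function.update_self, sup_bot_eq]
  exact evalB_congr ⊥ E fun q hq => Function.update_of_ne (ne_of_mem_of_not_mem hq hx) _ _

def AdmissibleIn (L : Set Fml) (Γ Δ : Finset Fml) : Prop :=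
  ∀ σ : ℕ → Fml, (∀ A ∈ Γ, A.subst σ ∈ L) → ∃ B ∈ Δ, B.subst σ ∈ L

def PosAdmissibleIn (P : Set Fml) (Γ Δ : Finset Fml) : Prop :=
  ∀ σ : ℕ → Fml, PosSubst σ → (∀ A ∈ Γ, A.subst σ ∈ P) → ∃ B ∈ Δ, B.subst σ ∈ P

theorem posAdmissibleIn_of_admissibleIn_IntPlus {P : Set Fml} (hP : IsPosLogic P)
    {Γ Δ : Finset Fml} (hΔ : ∀ B ∈ Δ, B.Positive) (h : AdmissibleIn (IntPlus P) Γ Δ) :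
    PosAdmissibleIn P Γ Δ := fun σ hσ hΓ => by
  obtain ⟨B, hB, hBσ⟩ := h σ fun A hA => subset_IntPlus P (hΓ A hA)
  exact ⟨B, hB, mem_of_mem_IntPlus_of_positive hP hBσ (positive_subst hσ (hΔ B hB))⟩

theorem admissibleIn_IntPlus_of_posAdmissibleIn {P : Set Fml} (hP : IsPosLogic P)
    {Γ Δ : Finset Fml} (hΓ : ∀ A ∈ Γ, A.Positive) (hΔ : ∀ B ∈ Δ, B.Positive)
    (h : PosAdmissibleIn P Γ Δ) : AdmissibleIn (IntPlus P) Γ Δ := by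
  classical
  intro σ hΓσ
  obtain ⟨x, hx⟩ := Infinite.exists_notMem_finset (Δ.biUnion fun B => (B.subst σ).vars)
  set ρ : ℕ → Fml := fun q => or (var q) (var x)
  have hρ : PosSubst ρ := fun _ => ⟨trivial, trivial⟩
  have hxρ : ∀ q, imp (var x) (ρ q) ∈ IntL := fun _ =>
    imp_mem_IntL_iff.2 fun _ _ _ => le_sup_right
  set τ : ℕ → Fml := fun n => (σ n).substB (var x) ρ
  have hτ : ∀ A : Fml, A.Positive → A.subst τ = (A.subst σ).substB (var x) ρ := fun A hA => by
    rw [substB_subst, substB_eq_subst_of_positive _ _ A hA]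
  have hτpos : PosSubst τ := fun n => positive_substB (c := var x) trivial hρ (σ n)
  obtain ⟨B, hB, hBτ⟩ := h τ hτpos fun A hA => by
    rw [hτ A (hΓ A hA)]
    exact substB_mem_of_mem_IntPlus (c := var x) hP (hΓσ A hA) trivial hρ hxρ
  have hxB : x ∉ (B.subst σ).vars := fun hxB => hx (Finset.mem_biUnion.2 ⟨B, hB, hxB⟩)
  have hL := isSILogic_IntPlus P
  refine ⟨B, hB, hL.mem_of_imp_mem_IntL
    (hL.subst_closed _ (subset_IntPlus P hBτ) (Function.update var x bot))
    (imp_mem_IntL_of_eval_eq fun α _ ν => ?_)⟩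
  rw [hτ B (hΔ B hB)]
  exact eval_subst_update_bot_substB_or hxB ν

/-- a positive m-rule Γ/Δ is admissible for a positive logic P iff it
is admissible for L = Int + P. -/
theorem stmt13 (P : Set Fml) (hP : IsPosLogic P) (Γ Δ : Finset Fml)
    (hΓ : ∀ A ∈ Γ, A.Positive) (hΔ : ∀ B ∈ Δ, B.Positive) :
    (∀ σ : ℕ → Fml, PosSubst σ → (∀ A ∈ Γ, A.subst σ ∈ P) →
        ∃ B ∈ Δ, B.subst σ ∈ P) ↔
    (∀ σ : ℕ → Fml, (∀ A ∈ Γ, A.subst σ ∈ IntPlus P) →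
        ∃ B ∈ Δ, B.subst σ ∈ IntPlus P) :=
  ⟨admissibleIn_IntPlus_of_posAdmissibleIn hP hΓ hΔ,
    posAdmissibleIn_of_admissibleIn_IntPlus hP hΔ⟩
end
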